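/- Let H be a complex Hilbert space and X : H → H a bounded linear operator. Set R = X*X + XX*. Then w(X)⁴ ≥ (1/16)‖R‖² + (1/4)c(X²)² + (1/8)m(X²R + RX²). -/

import Mathlib

noncomputable def numRadius {H : Type*} [NormedAddCommGroup H] [InnerProductSpace ℂ H]
    (T : H →L[ℂ] H) : ℝ :=
  sSup {r : ℝ | ∃ x : H, ‖x‖ = 1 ∧ r = ‖(inner ℂ (T x) x : ℂ)‖}

noncomputable def crawford {H : Type*} [NormedAddCommGroup H] [InnerProductSpace ℂ H]
    (T : H →L[ℂ] H) : ℝ :=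
  sInf {r : ℝ | ∃ x : H, ‖x‖ = 1 ∧ r = ‖(inner ℂ (T x) x : ℂ)‖}

noncomputable def reOp {H : Type*} [NormedAddCommGroup H] [InnerProductSpace ℂ H]
    [CompleteSpace H] (A : H →L[ℂ] H) : H →L[ℂ] H :=
  (2 : ℂ)⁻¹ • (A + ContinuousLinearMap.adjoint A)

noncomputable def cNum {H : Type*} [NormedAddCommGroup H] [InnerProductSpace ℂ H]
    [CompleteSpace H] (T : H →L[ℂ] H) : ℝ :=
  ⨅ θ : ℝ, sInf {r : ℝ | ∃ x : H, ‖x‖ = 1 ∧ r = ‖reOp (Complex.exp (θ * Complex.I) • T) x‖}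

/-!
For `‖u‖ = 1` put `A = Re(uX)`. Then `‖A‖ ≤ w(X)` and `A² = R/4 + Re(u²X²)/2`, so for a unit
vector `x`
`w(X)⁴ ≥ ‖A²x‖² = ‖Rx‖²/16 + ‖Re(u²X²)x‖²/4 + Re(ū² ⟨(X²R + RX²)x, x⟩)/8`.
Choosing `u` with `ū² ⟨(X²R + RX²)x, x⟩ = |⟨(X²R + RX²)x, x⟩|`, the last two terms are at least
`c(X²)²/4` and `m(X²R + RX²)/8`; taking the supremum over `x` bounds `‖R‖²`.
-/

open ContinuousLinearMap ComplexConjugate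
open scoped InnerProductSpace

theorem Complex.exists_norm_eq_one_conj_sq_mul_eq_norm (z : ℂ) :
    ∃ u : ℂ, ‖u‖ = 1 ∧ conj (u ^ 2) * z = ‖z‖ := by
  refine ⟨exp ((z.arg / 2 : ℝ) * I), norm_exp_ofReal_mul_I _, ?_⟩
  have hz := norm_mul_exp_arg_mul_I z
  generalize z.arg = θ at hz ⊢
  conv_lhs => rw [← hz]
  rw [← exp_nat_mul, ← exp_conj, mul_left_comm, ← exp_add]
  simp only [map_mul, map_natCast, conj_ofReal, conj_I]
  convert mul_one _
  rw [← exp_zero]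
  push_cast
  ring_nf

theorem ContinuousLinearMap.sq_opNorm_le_of_unit_norm {E F : Type*} [NormedAddCommGroup E]
    [NormedSpace ℂ E] [Nontrivial E] [NormedAddCommGroup F] [NormedSpace ℂ F]
    {T : E →L[ℂ] F} {M : ℝ} (h : ∀ x, ‖x‖ = 1 → ‖T x‖ ^ 2 ≤ M) : ‖T‖ ^ 2 ≤ M := by
  obtain ⟨e, he⟩ := exists_norm_eq E zero_le_one
  have hM : 0 ≤ M := (sq_nonneg _).trans (h e he)
  have : ‖T‖ ≤ √M :=
    opNorm_le_of_unit_norm (Real.sqrt_nonneg M) fun x hx ↦ Real.le_sqrt_of_sq_le (h x hx)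
  calc ‖T‖ ^ 2 ≤ √M ^ 2 := by gcongr
    _ = M := Real.sq_sqrt hM

theorem setOf_eq_empty_of_subsingleton {H : Type*} [NormedAddCommGroup H] [Subsingleton H]
    (f : H → ℝ) : {r : ℝ | ∃ x : H, ‖x‖ = 1 ∧ r = f x} = ∅ := by
  refine Set.eq_empty_of_forall_notMem fun r ⟨x, hx, _⟩ ↦ ?_
  simp [Subsingleton.elim x 0] at hx

section InnerProductSpace

variable {H : Type*} [NormedAddCommGroup H] [InnerProductSpace ℂ H]

theorem numRadius_of_subsingleton [Subsingleton H] (T : H →L[ℂ] H) : numRadius T = 0 := by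
  simp [numRadius, setOf_eq_empty_of_subsingleton]

theorem crawford_of_subsingleton [Subsingleton H] (T : H →L[ℂ] H) : crawford T = 0 := by
  simp [crawford, setOf_eq_empty_of_subsingleton]

theorem numRadius_nonneg (T : H →L[ℂ] H) : 0 ≤ numRadius T :=
  Real.sSup_nonneg fun _ ⟨_, _, hr⟩ ↦ hr ▸ norm_nonneg _

theorem norm_inner_le_numRadius (T : H →L[ℂ] H) {x : H} (hx : ‖x‖ = 1) :
    ‖⟪T x, x⟫_ℂ‖ ≤ numRadius T := by
  refine le_csSup ⟨‖T‖, ?_⟩ ⟨x, hx, rfl⟩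
  rintro _ ⟨y, hy, rfl⟩
  calc ‖⟪T y, y⟫_ℂ‖ ≤ ‖T y‖ * ‖y‖ := norm_inner_le_norm _ _
    _ ≤ ‖T‖ := by simpa [hy] using T.unit_le_opNorm y hy.le

theorem crawford_le_norm_inner (T : H →L[ℂ] H) {x : H} (hx : ‖x‖ = 1) :
    crawford T ≤ ‖⟪T x, x⟫_ℂ‖ :=
  csInf_le ⟨0, fun _ ⟨_, _, hr⟩ ↦ hr ▸ norm_nonneg _⟩ ⟨x, hx, rfl⟩

variable [CompleteSpace H]

theorem IsSelfAdjoint.opNorm_le_of_abs_re_inner_le {A : H →L[ℂ] H} (hA : IsSelfAdjoint A)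
    {M : ℝ} (hM : 0 ≤ M) (h : ∀ x, ‖x‖ = 1 → |(⟪A x, x⟫_ℂ).re| ≤ M) : ‖A‖ ≤ M := by
  rw [A.norm_eq_iSup_rayleighQuotient hA.isSymmetric]
  refine ciSup_le fun x ↦ ?_
  rcases eq_or_ne x 0 with rfl | hx
  · simpa using hM
  have hx' : ‖x‖ ≠ 0 := norm_ne_zero_iff.mpr hx
  rw [← A.rayleigh_smul x (c := ((‖x‖⁻¹ : ℝ) : ℂ)) (by simpa using hx')]
  have hu : ‖((‖x‖⁻¹ : ℝ) : ℂ) • x‖ = 1 := by simp [norm_smul, hx']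
  rw [rayleighQuotient, reApplyInnerSelf_apply, hu, one_pow, div_one]
  exact h _ hu

theorem ContinuousLinearMap.adjoint_smul (u : ℂ) (A : H →L[ℂ] H) :
    adjoint (u • A) = conj u • adjoint A := by
  rw [← star_eq_adjoint, star_smul, star_eq_adjoint]
  rfl

theorem isSelfAdjoint_adjoint_comp_self_add_comp_adjoint (X : H →L[ℂ] H) :
    IsSelfAdjoint (adjoint X ∘L X + X ∘L adjoint X) :=
  (IsSelfAdjoint.star_mul_self X).add (IsSelfAdjoint.mul_star_self X)

theorem cNum_of_subsingleton [Subsingleton H] (T : H →L[ℂ] H) : cNum T = 0 := by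
  simp [cNum, setOf_eq_empty_of_subsingleton]

theorem cNum_nonneg (T : H →L[ℂ] H) : 0 ≤ cNum T :=
  Real.iInf_nonneg fun _ ↦ Real.sInf_nonneg fun _ ⟨_, _, hr⟩ ↦ hr ▸ norm_nonneg _

theorem cNum_le_norm_reOp_smul_apply (T : H →L[ℂ] H) {v : ℂ} (hv : ‖v‖ = 1) {x : H}
    (hx : ‖x‖ = 1) : cNum T ≤ ‖reOp (v • T) x‖ := by
  have hv' : Complex.exp (v.arg * Complex.I) = v := by
    simpa [hv] using Complex.norm_mul_exp_arg_mul_I v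
  calc cNum T ≤ _ := ciInf_le ⟨0, fun _ ⟨_, hθ⟩ ↦ hθ ▸ Real.sInf_nonneg
        fun _ ⟨_, _, hr⟩ ↦ hr ▸ norm_nonneg _⟩ v.arg
    _ ≤ ‖reOp (v • T) x‖ :=
      csInf_le ⟨0, fun _ ⟨_, _, hr⟩ ↦ hr ▸ norm_nonneg _⟩ ⟨x, hx, by rw [hv']⟩

theorem isSelfAdjoint_reOp (A : H →L[ℂ] H) : IsSelfAdjoint (reOp A) := by
  rw [IsSelfAdjoint, reOp, star_smul, star_add, star_eq_adjoint, star_eq_adjoint,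
    adjoint_adjoint, add_comm]
  simp

theorem re_inner_reOp_apply_self (A : H →L[ℂ] H) (x : H) :
    (⟪reOp A x, x⟫_ℂ).re = (⟪A x, x⟫_ℂ).re := by
  have : ⟪adjoint A x, x⟫_ℂ = conj ⟪A x, x⟫_ℂ := by
    rw [adjoint_inner_left, inner_conj_symm]
  rw [reOp, smul_apply, inner_smul_left, add_apply, inner_add_left, this, Complex.add_conj]
  simp

theorem norm_reOp_smul_le_numRadius (T : H →L[ℂ] H) {u : ℂ} (hu : ‖u‖ = 1) :
    ‖reOp (u • T)‖ ≤ numRadius T := by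
  refine (isSelfAdjoint_reOp _).opNorm_le_of_abs_re_inner_le (numRadius_nonneg T) fun x hx ↦ ?_
  rw [re_inner_reOp_apply_self]
  calc _ ≤ ‖⟪(u • T) x, x⟫_ℂ‖ := Complex.abs_re_le_norm _
    _ = ‖⟪T x, x⟫_ℂ‖ := by simp [hu]
    _ ≤ numRadius T := norm_inner_le_numRadius T hx

theorem reOp_smul_comp_reOp_smul (X : H →L[ℂ] H) {u : ℂ} (hu : ‖u‖ = 1) :
    reOp (u • X) ∘L reOp (u • X) = (4 : ℂ)⁻¹ • (adjoint X ∘L X + X ∘L adjoint X)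
      + (2 : ℂ)⁻¹ • reOp (u ^ 2 • (X ∘L X)) := by
  have hu' : conj u * u = 1 := by
    rw [RCLike.conj_mul, hu]
    simp
  ext x
  simp only [reOp, adjoint_smul, adjoint_comp, comp_apply, add_apply, smul_apply, map_add,
    map_smul, smul_add, smul_smul, map_pow]
  match_scalars <;> first | ring1 | linear_combination (4 : ℂ)⁻¹ * hu'

theorem re_inner_apply_reOp_smul_apply {R : H →L[ℂ] H} (hR : IsSelfAdjoint R) (v : ℂ)
    (T : H →L[ℂ] H) (x : H) :
    (⟪R x, reOp (v • T) x⟫_ℂ).re = 2⁻¹ * (conj v * ⟪(T ∘L R + R ∘L T) x, x⟫_ℂ).re := by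
  have h₁ : ⟪R x, T x⟫_ℂ = conj ⟪(R ∘L T) x, x⟫_ℂ := by
    rw [inner_conj_symm, comp_apply, ← adjoint_inner_right, hR.adjoint_eq]
  have h₂ : ⟪R x, adjoint T x⟫_ℂ = ⟪(T ∘L R) x, x⟫_ℂ := by
    rw [adjoint_inner_right, comp_apply]
  rw [reOp, smul_apply, inner_smul_right, add_apply, inner_add_right, adjoint_smul, smul_apply,
    smul_apply, inner_smul_right, inner_smul_right, h₁, h₂, add_apply, inner_add_left]
  generalize ⟪(R ∘L T) x, x⟫_ℂ = p
  generalize ⟪(T ∘L R) x, x⟫_ℂ = q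
  simp [Complex.mul_re]
  ring

theorem norm_sq_reOp_smul_comp_reOp_smul_apply (X R : H →L[ℂ] H)
    (hR : R = adjoint X ∘L X + X ∘L adjoint X) {u : ℂ} (hu : ‖u‖ = 1) (x : H) :
    ‖(reOp (u • X) ∘L reOp (u • X)) x‖ ^ 2
      = 16⁻¹ * ‖R x‖ ^ 2 + 4⁻¹ * ‖reOp (u ^ 2 • (X ∘L X)) x‖ ^ 2
        + 8⁻¹ * (conj (u ^ 2) * ⟪((X ∘L X) ∘L R + R ∘L (X ∘L X)) x, x⟫_ℂ).re := by
  have hRsa : IsSelfAdjoint R := hR ▸ isSelfAdjoint_adjoint_comp_self_add_comp_adjoint X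
  have hcross := re_inner_apply_reOp_smul_apply hRsa (u ^ 2) (X ∘L X) x
  have hscalar : conj (4 : ℂ)⁻¹ * 2⁻¹ = ((8⁻¹ : ℝ) : ℂ) := by
    simp only [map_inv₀, map_ofNat]
    norm_num
  rw [reOp_smul_comp_reOp_smul X hu, ← hR, add_apply, smul_apply, smul_apply,
    norm_add_sq (𝕜 := ℂ), norm_smul, norm_smul, inner_smul_left, inner_smul_right, ← mul_assoc,
    hscalar, RCLike.re_to_complex, Complex.re_ofReal_mul, hcross]
  norm_num
  ring

theorem numRadius_pow_four_lower_apply (X R : H →L[ℂ] H)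
    (hR : R = adjoint X ∘L X + X ∘L adjoint X) {x : H} (hx : ‖x‖ = 1) :
    16⁻¹ * ‖R x‖ ^ 2 + 4⁻¹ * cNum (X ∘L X) ^ 2
      + 8⁻¹ * crawford ((X ∘L X) ∘L R + R ∘L (X ∘L X)) ≤ numRadius X ^ 4 := by
  set S := (X ∘L X) ∘L R + R ∘L (X ∘L X)
  obtain ⟨u, hu, hz⟩ := Complex.exists_norm_eq_one_conj_sq_mul_eq_norm ⟪S x, x⟫_ℂ
  set A := reOp (u • X)
  have hA : ‖A‖ ≤ numRadius X := norm_reOp_smul_le_numRadius X hu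
  have hAAx : ‖(A ∘L A) x‖ ^ 2 ≤ numRadius X ^ 4 :=
    calc ‖(A ∘L A) x‖ ^ 2 ≤ (‖A‖ * ‖A‖) ^ 2 := by
          gcongr
          exact ((A ∘L A).unit_le_opNorm x hx.le).trans (opNorm_comp_le A A)
      _ ≤ (numRadius X * numRadius X) ^ 2 := by
          gcongr
          exact numRadius_nonneg X
      _ = numRadius X ^ 4 := by ring
  have hB : cNum (X ∘L X) ^ 2 ≤ ‖reOp (u ^ 2 • (X ∘L X)) x‖ ^ 2 := by
    gcongr
    · exact cNum_nonneg _
    · exact cNum_le_norm_reOp_smul_apply _ (by simp [hu]) hx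
  have hS : crawford S ≤ ‖⟪S x, x⟫_ℂ‖ := crawford_le_norm_inner S hx
  have hexpand := norm_sq_reOp_smul_comp_reOp_smul_apply X R hR hu x
  rw [hz, Complex.ofReal_re] at hexpand
  linarith

end InnerProductSpace

theorem numRadius_pow_four_lower
    {H : Type*} [NormedAddCommGroup H] [InnerProductSpace ℂ H] [CompleteSpace H]
    (X : H →L[ℂ] H) (R : H →L[ℂ] H)
    (hR : R = (ContinuousLinearMap.adjoint X).comp X + X.comp (ContinuousLinearMap.adjoint X)) :
    (numRadius X) ^ 4 ≥ (1 / 16 : ℝ) * ‖R‖ ^ 2 + (1 / 4 : ℝ) * (cNum (X.comp X)) ^ 2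
      + (1 / 8 : ℝ) * crawford ((X.comp X).comp R + R.comp (X.comp X)) := by
  rcases subsingleton_or_nontrivial H with hH | hH
  -- on the zero space `numRadius`, `crawford` and `cNum` are `sSup ∅ = 0` and `sInf ∅ = 0`
  · simp [numRadius_of_subsingleton, cNum_of_subsingleton, crawford_of_subsingleton,
      Subsingleton.elim R 0]
  · have hRnorm := R.sq_opNorm_le_of_unit_norm fun x hx ↦
      (by linarith [numRadius_pow_four_lower_apply X R hR hx] :
        ‖R x‖ ^ 2 ≤ 16 * (numRadius X ^ 4 - 4⁻¹ * cNum (X ∘L X) ^ 2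
          - 8⁻¹ * crawford ((X ∘L X) ∘L R + R ∘L (X ∘L X))))
    linarith
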